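/- Let G be the graph on n vertices obtained from the cycle C_{n−1} (n ≥ 4) by attaching a leaf, i.e., by adding one new vertex adjacent to exactly one vertex of the cycle. Then γ_gr^L(G) = n. -/

import Mathlib

/-- A list of distinct vertices `s = (v_1, …, v_k)` is an *L-sequence* of `G` if for each `i`,
`N[v_i] \ ⋃_{j<i} N(v_j) ≠ ∅`, i.e. there is a vertex `w` in the closed neighborhood of `v_i`
that lies in no open neighborhood `N(v_j)` for `j < i`. -/
def IsLSeq {V : Type*} (G : SimpleGraph V) (s : List V) : Prop :=
  s.Nodup ∧ ∀ i : Fin s.length, ∃ w : V,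
    (w = s.get i ∨ G.Adj (s.get i) w) ∧
    ∀ j : Fin s.length, j < i → ¬ G.Adj (s.get j) w

/-- The L-Grundy domination number of `G`: the maximum length of an L-sequence of `G`. -/
noncomputable def LGrundy {V : Type*} [Fintype V] (G : SimpleGraph V) : ℕ :=
  sSup {k : ℕ | ∃ s : List V, IsLSeq G s ∧ s.length = k}

/-- The graph obtained from the cycle `C_m` by attaching one new vertex (a leaf) adjacent to
exactly one vertex of the cycle. -/
def cycleWithLeaf (m : ℕ) : SimpleGraph (Fin m ⊕ Unit) :=
  SimpleGraph.fromRel (fun a b =>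
    match a, b with
    | Sum.inl i, Sum.inl j => (SimpleGraph.cycleGraph m).Adj i j
    | Sum.inl i, Sum.inr _ => i.val = 0
    | _, _ => False)

/-!
If `ℓ` is a pendant vertex with neighbour `x`, every L-sequence avoiding both extends by `ℓ, x`:
`ℓ` is a footprint of itself and then of `x`, as no vertex other than `x` is adjacent to it.
Deleting the two end vertices of the path `P_{k+2}` leaves `P_k`, so by induction every path has an
L-sequence through all of its vertices. Deleting from `C_m` the vertex `0` that carries the leaf
leaves a path on the other `m - 1` cycle vertices; its full L-sequence, followed by the leaf and
then `0`, exhausts the graph.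
-/

open SimpleGraph

section LSequence

variable {V W : Type*} {G : SimpleGraph V}

theorem isLSeq_iff_getElem {s : List V} : IsLSeq G s ↔ s.Nodup ∧ ∀ (i : ℕ) (hi : i < s.length),
    ∃ w, (w = s[i] ∨ G.Adj s[i] w) ∧ ∀ (j : ℕ) (hj : j < i), ¬ G.Adj (s[j]'(hj.trans hi)) w := by
  simp only [IsLSeq, Fin.forall_iff, List.get_eq_getElem, Fin.lt_def]
  refine and_congr_right fun _ => forall₂_congr fun i hi =>
    exists_congr fun w => and_congr_right fun _ => ?_
  exact ⟨fun h j hj => h j (hj.trans hi) hj, fun h j _ hj => h j hj⟩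

theorem isLSeq_nil : IsLSeq G [] := ⟨List.nodup_nil, fun i => i.elim0⟩

theorem isLSeq_append_singleton_iff {s : List V} {v : V} :
    IsLSeq G (s ++ [v]) ↔
      IsLSeq G s ∧ v ∉ s ∧ ∃ w, (w = v ∨ G.Adj v w) ∧ ∀ u ∈ s, ¬ G.Adj u w := by
  simp only [isLSeq_iff_getElem, List.nodup_append, List.nodup_singleton, List.mem_singleton,
    List.length_append, List.length_singleton]
  constructor
  · rintro ⟨⟨hs, -, hv⟩, h⟩
    refine ⟨⟨hs, fun i hi => ?_⟩, fun hmem => hv v hmem v rfl rfl, ?_⟩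
    · obtain ⟨w, hw, hfree⟩ := h i (by omega)
      refine ⟨w, by simpa [List.getElem_append_left hi] using hw, fun j hj => ?_⟩
      simpa [List.getElem_append_left (hj.trans hi)] using hfree j hj
    · obtain ⟨w, hw, hfree⟩ := h s.length (by omega)
      refine ⟨w, by simpa using hw, List.forall_mem_iff_getElem.2 fun j hj => ?_⟩
      simpa [List.getElem_append_left hj] using hfree j hj
  · rintro ⟨⟨hs, h⟩, hv, w, hw, hfree⟩
    refine ⟨⟨hs, trivial, fun a ha b hb => hb ▸ fun hab => hv (hab ▸ ha)⟩, fun i hi => ?_⟩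
    rcases Nat.lt_succ_iff_lt_or_eq.1 hi with hi | rfl
    · obtain ⟨w, hw, hfree⟩ := h i hi
      refine ⟨w, by simpa [List.getElem_append_left hi] using hw, fun j hj => ?_⟩
      simpa [List.getElem_append_left (hj.trans hi)] using hfree j hj
    · refine ⟨w, by simpa using hw, fun j hj => ?_⟩
      simpa [List.getElem_append_left hj] using List.forall_mem_iff_getElem.1 hfree j hj

theorem isLSeq_singleton (v : V) : IsLSeq G [v] :=
  isLSeq_append_singleton_iff (s := []).2 ⟨isLSeq_nil, List.not_mem_nil, v, Or.inl rfl, by simp⟩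

theorem IsLSeq.append_pendant {s : List V} {x ℓ : V} (hs : IsLSeq G s) (hxℓ : G.Adj x ℓ)
    (hℓ : ∀ y, G.Adj y ℓ → y = x) (hx : x ∉ s) (hℓs : ℓ ∉ s) : IsLSeq G (s ++ [ℓ, x]) := by
  have hsℓ : IsLSeq G (s ++ [ℓ]) :=
    isLSeq_append_singleton_iff.2 ⟨hs, hℓs, ℓ, Or.inl rfl, fun u hu h => hx (hℓ u h ▸ hu)⟩
  have hxsℓ : x ∉ s ++ [ℓ] := by simp [hx, hxℓ.ne]
  simpa using isLSeq_append_singleton_iff.2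
    ⟨hsℓ, hxsℓ, ℓ, Or.inr hxℓ, fun u hu h => hxsℓ (hℓ u h ▸ hu)⟩

theorem IsLSeq.map {H : SimpleGraph W} (f : G ↪g H) {s : List V} (hs : IsLSeq G s) :
    IsLSeq H (s.map f) := by
  induction s using List.reverseRecOn with
  | nil => exact isLSeq_nil
  | append_singleton s v ih =>
    obtain ⟨hs, hv, w, hw, hfree⟩ := isLSeq_append_singleton_iff.1 hs
    rw [List.map_append, List.map_singleton]
    refine isLSeq_append_singleton_iff.2 ⟨ih hs, by simpa using hv, f w, ?_, ?_⟩
    · rcases hw with rfl | h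
      exacts [Or.inl rfl, Or.inr (f.map_adj_iff.2 h)]
    · simpa [f.map_adj_iff] using hfree

theorem lgrundy_eq_card_of_isLSeq [Fintype V] {s : List V} (hs : IsLSeq G s)
    (hlen : s.length = Fintype.card V) : LGrundy G = Fintype.card V := by
  have hbdd : ∀ k ∈ {k | ∃ s : List V, IsLSeq G s ∧ s.length = k}, k ≤ Fintype.card V := by
    rintro k ⟨t, ht, rfl⟩
    exact ht.1.length_le_card
  exact le_antisymm (csSup_le ⟨_, s, hs, hlen⟩ hbdd) (le_csSup ⟨_, hbdd⟩ ⟨s, hs, hlen⟩)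

end LSequence

def pathGraphAddTwo (n : ℕ) : pathGraph n ↪g pathGraph (n + 2) :=
  ⟨Fin.addNatEmb 2, by simp [pathGraph_adj]⟩

theorem exists_isLSeq_pathGraph : ∀ n : ℕ, ∃ s, IsLSeq (pathGraph n) s ∧ s.length = n
  | 0 => ⟨[], isLSeq_nil, rfl⟩
  | 1 => ⟨[0], isLSeq_singleton 0, rfl⟩
  | n + 2 => by
    obtain ⟨s, hs, hlen⟩ := exists_isLSeq_pathGraph n
    refine ⟨s.map (pathGraphAddTwo n) ++ [0, 1], (hs.map _).append_pendant ?_ ?_ ?_ ?_, ?_⟩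
    · simp [pathGraph_adj]
    · intro y hy
      rw [pathGraph_adj] at hy
      ext
      simp only [Fin.val_zero, Fin.val_one] at hy ⊢
      omega
    · simp [pathGraphAddTwo, Fin.ext_iff]
    · simp [pathGraphAddTwo, Fin.ext_iff]
    · simp [hlen]

theorem cycleGraph_adj_succ_succ {n : ℕ} {i j : Fin n} :
    (cycleGraph (n + 1)).Adj i.succ j.succ ↔ (pathGraph n).Adj i j := by
  rw [cycleGraph_adj', pathGraph_adj]
  grind [Fin.sub_val_of_le, Fin.coe_sub_iff_lt]

def pathGraphToCycleGraph (n : ℕ) : pathGraph n ↪g cycleGraph (n + 1) :=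
  ⟨Fin.succEmb n, cycleGraph_adj_succ_succ⟩

theorem cycleWithLeaf_adj_inl_inl {m : ℕ} {i j : Fin m} :
    (cycleWithLeaf m).Adj (.inl i) (.inl j) ↔ (cycleGraph m).Adj i j := by
  simp only [cycleWithLeaf, fromRel_adj, ne_eq, Sum.inl.injEq]
  exact ⟨fun h => h.2.elim id (·.symm), fun h => ⟨h.ne, .inl h⟩⟩

theorem cycleWithLeaf_adj_inr {n : ℕ} {v : Fin (n + 1) ⊕ Unit} {u : Unit} :
    (cycleWithLeaf (n + 1)).Adj v (.inr u) ↔ v = .inl 0 := by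
  rcases v with i | _
  · simp only [cycleWithLeaf, fromRel_adj, Sum.inl.injEq, Fin.ext_iff, Fin.val_zero, or_false]
    exact ⟨And.right, fun h => ⟨Sum.inl_ne_inr, h⟩⟩
  · exact iff_of_false (fun h => h.2.elim id id) Sum.inr_ne_inl

def cycleGraphToCycleWithLeaf (m : ℕ) : cycleGraph m ↪g cycleWithLeaf m :=
  ⟨Function.Embedding.inl, cycleWithLeaf_adj_inl_inl⟩

theorem exists_isLSeq_cycleWithLeaf : ∀ m : ℕ, ∃ s, IsLSeq (cycleWithLeaf m) s ∧ s.length = m + 1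
  | 0 => ⟨[.inr ()], isLSeq_singleton _, rfl⟩
  | n + 1 => by
    obtain ⟨s, hs, hlen⟩ := exists_isLSeq_pathGraph n
    let e := (pathGraphToCycleGraph n).trans (cycleGraphToCycleWithLeaf (n + 1))
    refine ⟨s.map e ++ [.inr (), .inl 0], (hs.map e).append_pendant ?_ ?_ ?_ ?_, ?_⟩
    · exact cycleWithLeaf_adj_inr.2 rfl
    · exact fun y => cycleWithLeaf_adj_inr.1
    · simp only [List.mem_map, not_exists, not_and]
      exact fun x _ => Sum.inl_injective.ne (Fin.succ_ne_zero x)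
    · simp only [List.mem_map, not_exists, not_and]
      exact fun x _ => Sum.inl_ne_inr
    · simp [hlen]

theorem lgrundy_cycleWithLeaf_general (m : ℕ) :
    Fintype.card (Fin m ⊕ Unit) = m + 1 ∧ LGrundy (cycleWithLeaf m) = m + 1 := by
  have hcard : Fintype.card (Fin m ⊕ Unit) = m + 1 := by simp
  obtain ⟨s, hs, hlen⟩ := exists_isLSeq_cycleWithLeaf m
  exact ⟨hcard, hcard ▸ lgrundy_eq_card_of_isLSeq hs (hlen.trans hcard.symm)⟩

/-- If `G` is the graph on `n = m + 1 ≥ 4` vertices obtained from the cycle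
`C_m` by attaching a leaf, then `γ_gr^L(G) = n`. -/
theorem lgrundy_cycleWithLeaf (m : ℕ) (hm : 3 ≤ m) :
    Fintype.card (Fin m ⊕ Unit) = m + 1 ∧ LGrundy (cycleWithLeaf m) = m + 1 :=
  lgrundy_cycleWithLeaf_general m
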